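/- Let ρ(y,z) = ρ₀ − y² − β²z² with 0 < β ≤ 1, and let 0 ≤ ρ_* < ρ^* ≤ ρ₀. Any Lipschitz path γ in {ρ > 0} joining the level set {ρ = ρ_*} to {ρ = ρ^*} satisfies ∫_γ ρ dl ≥ ∫_{y^*}^{y_*} (ρ₀ − y²) dy ≥ (1/(4√ρ₀))((ρ^*)² − (ρ_*)²) ≥ (1/(4√ρ₀))(ρ^* − ρ_*)², where y_* = √(ρ₀ − ρ_*) and y^* = √(ρ₀ − ρ^*). -/

import Mathlib

open MeasureTheory Set

open Filter Topology intervalIntegral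

noncomputable def clampS (c w : ℝ) : ℝ := max 0 (min w c)
noncomputable def PhiS (p w : ℝ) : ℝ := p * w - w^3/3
noncomputable def psiS (p w : ℝ) : ℝ := PhiS p (clampS (Real.sqrt p) w)

lemma clampS_mem {c : ℝ} (hc : 0 ≤ c) (w : ℝ) : clampS c w ∈ Icc 0 c := by
  constructor
  · exact le_max_left _ _
  · exact max_le hc (min_le_right _ _)

lemma clampS_lip (c u v : ℝ) : |clampS c u - clampS c v| ≤ |u - v| := by
  have h1 : |max 0 (min u c) - max 0 (min v c)| ≤ |min u c - min v c| := by
    rw [max_comm 0 (min u c), max_comm 0 (min v c)]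
    exact abs_max_sub_max_le_abs _ _ _
  have h2 : |min u c - min v c| ≤ |u - v| := by
    rw [show u ⊓ c = -((-u) ⊔ (-c)) by rw [max_neg_neg]; ring,
       show v ⊓ c = -((-v) ⊔ (-c)) by rw [max_neg_neg]; ring]
    have := abs_max_sub_max_le_abs (-u) (-v) (-c)
    calc |-max (-u) (-c) - -max (-v) (-c)| = |max (-u) (-c) - max (-v) (-c)| := by
          rw [← abs_neg]; ring_nf
      _ ≤ |-u - -v| := this
      _ = |u - v| := by rw [← abs_neg]; ring_nf
  exact h1.trans h2

lemma clampS_eq {c w : ℝ} (h0 : 0 ≤ w) (h1 : w ≤ c) : clampS c w = w := by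
  unfold clampS
  rw [min_eq_left h1, max_eq_right h0]

lemma PhiS_lip {p a b : ℝ} (hp : 0 ≤ p) (ha : a ∈ Icc 0 (Real.sqrt p))
    (hb : b ∈ Icc 0 (Real.sqrt p)) : |PhiS p a - PhiS p b| ≤ p * |a - b| := by
  have hsq : Real.sqrt p ^ 2 = p := Real.sq_sqrt hp
  have ha2 : a^2 ≤ p := by
    have := pow_le_pow_left₀ ha.1 ha.2 2
    rwa [hsq] at this
  have hb2 : b^2 ≤ p := by
    have := pow_le_pow_left₀ hb.1 hb.2 2
    rwa [hsq] at this
  have key : PhiS p a - PhiS p b = (a - b) * (p - (a^2 + a*b + b^2)/3) := by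
    unfold PhiS; ring
  rw [key, abs_mul, mul_comm]
  apply mul_le_mul_of_nonneg_right _ (abs_nonneg _)
  rw [abs_le]
  constructor
  · nlinarith [mul_nonneg ha.1 hb.1]
  · nlinarith [mul_nonneg ha.1 hb.1]

lemma psiS_lip {p : ℝ} (hp : 0 ≤ p) (u v : ℝ) : |psiS p u - psiS p v| ≤ p * |u - v| := by
  have h1 := PhiS_lip hp (clampS_mem (Real.sqrt_nonneg p) u) (clampS_mem (Real.sqrt_nonneg p) v)
  exact h1.trans (mul_le_mul_of_nonneg_left (clampS_lip _ _ _) hp)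

lemma sqrt_quad_lip {β : ℝ} (hβ0 : 0 ≤ β) (a b c d : ℝ) :
    |Real.sqrt (a^2 + β^2*c^2) - Real.sqrt (b^2 + β^2*d^2)| ≤ |a - b| + β*|c - d| := by
  have e1 : Real.sqrt (a^2 + β^2*c^2) = ‖(⟨a, β*c⟩ : ℂ)‖ := by
    rw [Complex.norm_def, Complex.normSq_mk]; ring_nf
  have e2 : Real.sqrt (b^2 + β^2*d^2) = ‖(⟨b, β*d⟩ : ℂ)‖ := by
    rw [Complex.norm_def, Complex.normSq_mk]; ring_nf
  rw [e1, e2]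
  have h3 := abs_norm_sub_norm_le (⟨a, β*c⟩ : ℂ) ⟨b, β*d⟩
  refine h3.trans ?_
  have h4 := Complex.norm_le_abs_re_add_abs_im (⟨a, β*c⟩ - ⟨b, β*d⟩)
  refine h4.trans ?_
  have hre : (Complex.mk a (β*c) - Complex.mk b (β*d)).re = a - b := rfl
  have him : (Complex.mk a (β*c) - Complex.mk b (β*d)).im = β*c - β*d := rfl
  rw [hre, him]
  have : |β*c - β*d| = β * |c - d| := by
    rw [← mul_sub, abs_mul, abs_of_nonneg hβ0]
  rw [this]

lemma abs_deriv_le {f : ℝ → ℝ} {K : NNReal} (hf : LipschitzWith K f) (t : ℝ) :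
    |deriv f t| ≤ K := by
  by_cases h : DifferentiableAt ℝ f t
  · have hd := hasDerivAt_iff_tendsto_slope.1 h.hasDerivAt
    have habs : Tendsto (fun s => |slope f t s|) (𝓝[≠] t) (𝓝 |deriv f t|) := hd.abs
    refine le_of_tendsto habs ?_
    filter_upwards [self_mem_nhdsWithin] with s hs
    have hst : s ≠ t := hs
    rw [slope_def_field, abs_div]
    rw [div_le_iff₀ (abs_pos.2 (sub_ne_zero.2 hst))]
    have := hf.dist_le_mul s t
    rw [Real.dist_eq, Real.dist_eq] at this
    exact this
  · rw [deriv_zero_of_not_differentiableAt h]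
    simp

-- slope convergence along the sequence x + 1/(n+1)
lemma slope_seq_tendsto {f : ℝ → ℝ} {x d : ℝ} (hf : HasDerivAt f d x) :
    Tendsto (fun n : ℕ => (f (x + 1/(n+1)) - f x) * (n+1)) atTop (𝓝 d) := by
  have h1 : Tendsto (fun n : ℕ => x + 1/(n+1)) atTop (𝓝[≠] x) := by
    apply tendsto_nhdsWithin_of_tendsto_nhds_of_eventually_within
    · have : Tendsto (fun n : ℕ => (1:ℝ)/(n+1)) atTop (𝓝 0) :=
        tendsto_one_div_add_atTop_nhds_zero_nat
      simpa using tendsto_const_nhds.add this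
    · filter_upwards with n
      have : (0:ℝ) < 1/(n+1) := by positivity
      simp only [mem_compl_iff, mem_singleton_iff]
      intro h
      nlinarith [this]
  have h2 := (hasDerivAt_iff_tendsto_slope.1 hf).comp h1
  refine h2.congr fun n => ?_
  have hp : (0:ℝ) < 1/(n+1) := by positivity
  simp only [Function.comp, slope_def_field]
  rw [div_eq_iff (by nlinarith : x + 1/(n+1) - x ≠ 0)]
  field_simp
  ring

/-- FTC for Lipschitz functions. -/
lemma lip_ftc {g : ℝ → ℝ} {L : NNReal} (hg : LipschitzWith L g) :
    ∫ t in Set.Ioc (0:ℝ) 1, deriv g t = g 1 - g 0 := by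
  set μ := volume.restrict (Set.Ioc (0:ℝ) 1) with hμ
  set F : ℕ → ℝ → ℝ := fun n t => (g (t + 1/(n+1)) - g t) * (n+1) with hF
  have hgc : Continuous g := hg.continuous
  -- DCT
  have lim1 : Tendsto (fun n => ∫ t, F n t ∂μ) atTop (𝓝 (∫ t, deriv g t ∂μ)) := by
    apply tendsto_integral_of_dominated_convergence (fun _ => (L:ℝ))
    · intro n
      exact (((hgc.comp (continuous_id.add continuous_const)).sub hgc).mul
        continuous_const).aestronglyMeasurable
    · exact integrable_const _
    · intro n
      refine ae_of_all _ fun t => ?_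
      have := hg.dist_le_mul (t + 1/(n+1)) t
      rw [Real.dist_eq, Real.dist_eq] at this
      have hp : (0:ℝ) < 1/(n+1) := by positivity
      rw [Real.norm_eq_abs, abs_mul]
      have h2 : |((n:ℝ)+1)| = (n:ℝ)+1 := abs_of_pos (by positivity)
      rw [h2]
      calc |g (t + 1/(n+1)) - g t| * ((n:ℝ)+1)
          ≤ ((L:ℝ) * |t + 1/(n+1) - t|) * ((n:ℝ)+1) := by
            apply mul_le_mul_of_nonneg_right this (by positivity)
        _ = (L:ℝ) := by
            have : |t + 1/(↑n+1) - t| = 1/(↑n+1) := by rw [add_sub_cancel_left, abs_of_pos hp]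
            rw [this]; field_simp
    · refine ae_restrict_of_ae ?_
      filter_upwards [hg.ae_differentiableAt_of_real] with t ht
      exact slope_seq_tendsto ht.hasDerivAt
  -- explicit computation of ∫ F n
  set G : ℝ → ℝ := fun u => ∫ s in (0:ℝ)..u, g s with hG
  have hGd : ∀ u, HasDerivAt G (g u) u := fun u => (hgc.integral_hasStrictDerivAt 0 u).hasDerivAt
  have key : ∀ n : ℕ, ∫ t, F n t ∂μ
      = (G (1 + 1/(n+1)) - G 1) * (n+1) - (G (0 + 1/(n+1)) - G 0) * (n+1) := by
    intro n
    have hp : (0:ℝ) < 1/(n+1) := by positivity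
    have h01 : (0:ℝ) ≤ 1 := by norm_num
    rw [hμ, ← intervalIntegral.integral_of_le h01]
    have hint : ∀ a b : ℝ, (∫ t in a..b, g (t + 1/(n+1))) = G (b + 1/(n+1)) - G (a + 1/(n+1)) := by
      intro a b
      rw [intervalIntegral.integral_comp_add_right]
      rw [hG]
      rw [intervalIntegral.integral_interval_sub_left (hgc.intervalIntegrable _ _)
        (hgc.intervalIntegrable _ _)]
    have c1 : Continuous (fun t : ℝ => g (t + 1/(n+1))) := by fun_prop
    have : (∫ t in (0:ℝ)..1, F n t)
        = ((∫ t in (0:ℝ)..1, g (t + 1/(n+1))) - ∫ t in (0:ℝ)..1, g t) * (n+1) := by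
      rw [← intervalIntegral.integral_sub (c1.intervalIntegrable _ _) (hgc.intervalIntegrable _ _),
        ← intervalIntegral.integral_mul_const]
    rw [this, hint]
    have hg01 : (∫ t in (0:ℝ)..1, g t) = G 1 - G 0 := by
      rw [hG]; simp
    rw [hg01]
    ring
  have lim2 : Tendsto (fun n => ∫ t, F n t ∂μ) atTop (𝓝 (g 1 - g 0)) := by
    simp only [key]
    have t1 : Tendsto (fun n : ℕ => (G (1 + 1/(n+1)) - G 1) * (n+1)) atTop (𝓝 (g 1)) :=
      slope_seq_tendsto (hGd 1)
    have t0 : Tendsto (fun n : ℕ => (G (0 + 1/(n+1)) - G 0) * (n+1)) atTop (𝓝 (g 0)) :=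
      slope_seq_tendsto (hGd 0)
    exact t1.sub t0
  exact tendsto_nhds_unique lim1 lim2

lemma deriv_bound_pt (ρ₀ β : ℝ) (hρ₀ : 0 < ρ₀) (hβ0 : 0 < β) (hβ : β ≤ 1)
    (y z : ℝ → ℝ)
    (hin : ∀ t ∈ Icc (0:ℝ) 1, 0 ≤ ρ₀ - (y t)^2 - β^2*(z t)^2)
    (t : ℝ) (ht : t ∈ Ioo (0:ℝ) 1)
    (hyd : DifferentiableAt ℝ y t) (hzd : DifferentiableAt ℝ z t)
    (hgd : DifferentiableAt ℝ (fun s => psiS ρ₀ (Real.sqrt ((y s)^2 + β^2*(z s)^2))) t) :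
    -((ρ₀ - (y t)^2 - β^2*(z t)^2) * Real.sqrt ((deriv y t)^2 + (deriv z t)^2))
      ≤ deriv (fun s => psiS ρ₀ (Real.sqrt ((y s)^2 + β^2*(z s)^2))) t := by
  set g : ℝ → ℝ := fun s => psiS ρ₀ (Real.sqrt ((y s)^2 + β^2*(z s)^2)) with hgdef
  set r : ℝ → ℝ := fun s => Real.sqrt ((y s)^2 + β^2*(z s)^2) with hrdef
  have hβ2 : β^2 ≤ 1 := by nlinarith
  have hr_le : ∀ s ∈ Icc (0:ℝ) 1, r s ≤ Real.sqrt ρ₀ := by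
    intro s hs
    apply Real.sqrt_le_sqrt
    have := hin s hs
    linarith
  have hg_eq : ∀ s ∈ Icc (0:ℝ) 1, g s = PhiS ρ₀ (r s) := by
    intro s hs
    simp only [hgdef, psiS, hrdef]
    rw [clampS_eq (Real.sqrt_nonneg _) (hr_le s hs)]
  by_cases hu0 : (y t)^2 + β^2*(z t)^2 = 0
  · -- Case B : at a zero of r
    have hbz : 0 ≤ β^2 * (z t)^2 := mul_nonneg (sq_nonneg β) (sq_nonneg (z t))
    have hy2 : (y t)^2 = 0 := by linarith [sq_nonneg (y t)]
    have hbz2 : β^2 * (z t)^2 = 0 := by linarith [sq_nonneg (y t)]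
    have hz2 : (z t)^2 = 0 := by
      rcases mul_eq_zero.1 hbz2 with h | h
      · exact absurd h (pow_ne_zero 2 (ne_of_gt hβ0))
      · exact h
    have hy0 : y t = 0 := by
      have : y t * y t = 0 := by nlinarith
      rcases mul_eq_zero.1 this with h | h <;> exact h
    have hz0 : z t = 0 := by
      have : z t * z t = 0 := by nlinarith
      rcases mul_eq_zero.1 this with h | h <;> exact h
    have hrt : r t = 0 := by rw [hrdef]; simp only [hu0, Real.sqrt_zero]
    have hd := hasDerivAt_iff_tendsto_slope.1 hgd.hasDerivAt
    have hd' : Tendsto (slope g t) (𝓝[>] t) (𝓝 (deriv g t)) :=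
      hd.mono_left (nhdsWithin_mono _ fun s hs => ne_of_gt hs)
    set F : ℝ → ℝ := fun s => -(ρ₀ * Real.sqrt ((slope y t s)^2 + β^2*(slope z t s)^2)) with hFdef
    have hFt : Tendsto F (𝓝[>] t)
        (𝓝 (-(ρ₀ * Real.sqrt ((deriv y t)^2 + β^2*(deriv z t)^2)))) := by
      have hys : Tendsto (slope y t) (𝓝[>] t) (𝓝 (deriv y t)) :=
        (hasDerivAt_iff_tendsto_slope.1 hyd.hasDerivAt).mono_left
          (nhdsWithin_mono _ fun s hs => ne_of_gt hs)
      have hzs : Tendsto (slope z t) (𝓝[>] t) (𝓝 (deriv z t)) :=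
        (hasDerivAt_iff_tendsto_slope.1 hzd.hasDerivAt).mono_left
          (nhdsWithin_mono _ fun s hs => ne_of_gt hs)
      have h1 : Tendsto (fun s => (slope y t s)^2 + β^2*(slope z t s)^2) (𝓝[>] t)
          (𝓝 ((deriv y t)^2 + β^2*(deriv z t)^2)) := (hys.pow 2).add ((hzs.pow 2).const_mul _)
      exact (h1.sqrt.const_mul ρ₀).neg
    have hbound : F ≤ᶠ[𝓝[>] t] slope g t := by
      filter_upwards [self_mem_nhdsWithin, Ioo_mem_nhdsGT ht.2] with s hs hs1
      have hst : (0:ℝ) < s - t := sub_pos.2 hs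
      have hsIcc : s ∈ Icc (0:ℝ) 1 := ⟨(ht.1.trans hs).le, hs1.2.le⟩
      have hgt : g t = psiS ρ₀ 0 := by
        simp only [hgdef]; rw [show (y t)^2 + β^2*(z t)^2 = 0 from hu0, Real.sqrt_zero]
      have hgs : g s = psiS ρ₀ (r s) := rfl
      have hlow : -(ρ₀ * r s) ≤ g s - g t := by
        have h2 := psiS_lip hρ₀.le (r s) 0
        rw [← hgt, ← hgs, sub_zero, abs_of_nonneg (Real.sqrt_nonneg _ : 0 ≤ r s)] at h2
        linarith [(abs_le.1 h2).1]
      have hrs : r s / (s - t) = Real.sqrt ((slope y t s)^2 + β^2*(slope z t s)^2) := by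
        rw [slope_def_field, slope_def_field, hy0, hz0, sub_zero, sub_zero]
        simp only [hrdef]
        rw [show (y s/(s-t))^2 + β^2*(z s/(s-t))^2 = ((y s)^2 + β^2*(z s)^2)/(s-t)^2 by
          field_simp]
        rw [Real.sqrt_div (by positivity), Real.sqrt_sq hst.le]
      show -(ρ₀ * Real.sqrt ((slope y t s)^2 + β^2*(slope z t s)^2)) ≤ slope g t s
      rw [slope_def_field g t s, ← hrs,
        show -(ρ₀ * (r s / (s - t))) = (-(ρ₀ * r s))/(s-t) by ring]
      gcongr
    have hle := le_of_tendsto_of_tendsto hFt hd' hbound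
    refine le_trans ?_ hle
    have h8 : ρ₀ - (y t)^2 - β^2*(z t)^2 = ρ₀ := by rw [hy0, hz0]; ring
    rw [h8]
    have h9 : Real.sqrt ((deriv y t)^2 + β^2*(deriv z t)^2)
        ≤ Real.sqrt ((deriv y t)^2 + (deriv z t)^2) := by
      apply Real.sqrt_le_sqrt; nlinarith [sq_nonneg (deriv z t)]
    have := mul_le_mul_of_nonneg_left h9 hρ₀.le
    linarith
  · -- Case A : r t > 0
    have hu_pos : 0 < (y t)^2 + β^2*(z t)^2 := lt_of_le_of_ne (by positivity) (Ne.symm hu0)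
    have hu : HasDerivAt (fun s => (y s)^2 + β^2*(z s)^2)
        (2*(y t)*(deriv y t) + β^2*(2*(z t)*(deriv z t))) t := by
      have h1 : HasDerivAt (fun s => (y s)^2) (2*(y t)*(deriv y t)) t := by
        have := hyd.hasDerivAt.fun_pow 2
        simpa using this
      have h2 : HasDerivAt (fun s => β^2*(z s)^2) (β^2*(2*(z t)*(deriv z t))) t := by
        have := (hzd.hasDerivAt.pow 2).const_mul (β^2)
        simpa using this
      exact h1.add h2
    have hrd : HasDerivAt r ((2*(y t)*(deriv y t) + β^2*(2*(z t)*(deriv z t))) / (2 * r t)) t := by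
      have h3 := (Real.hasDerivAt_sqrt (ne_of_gt hu_pos)).comp t hu
      refine h3.congr_deriv ?_
      simp only [hrdef]
      ring
    have hΦ : HasDerivAt (fun w => PhiS ρ₀ w) (ρ₀ - (r t)^2) (r t) := by
      have h4 := ((hasDerivAt_id (r t)).const_mul ρ₀).sub ((hasDerivAt_pow 3 (r t)).div_const 3)
      have h5 : ρ₀ - (r t)^2 = ρ₀ * 1 - (3:ℕ) * r t ^ (3-1) / 3 := by push_cast; ring
      rw [h5]
      exact h4
    have hcomp : HasDerivAt (fun s => PhiS ρ₀ (r s))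
        ((ρ₀ - (r t)^2) * ((2*(y t)*(deriv y t) + β^2*(2*(z t)*(deriv z t)))/(2*r t))) t :=
      hΦ.comp t hrd
    have heq : (fun s => PhiS ρ₀ (r s)) =ᶠ[𝓝 t] g := by
      filter_upwards [isOpen_Ioo.mem_nhds ht] with s hs
      exact (hg_eq s (Ioo_subset_Icc_self hs)).symm
    have hgd' : HasDerivAt g
        ((ρ₀ - (r t)^2) * ((2*(y t)*(deriv y t) + β^2*(2*(z t)*(deriv z t)))/(2*r t))) t :=
      hcomp.congr_of_eventuallyEq heq.symm
    rw [hgd'.deriv]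
    have hrt2 : (r t)^2 = (y t)^2 + β^2*(z t)^2 := by
      simp only [hrdef]; exact Real.sq_sqrt (by positivity)
    have hrtpos : 0 < r t := by simp only [hrdef]; exact Real.sqrt_pos.2 hu_pos
    have hPpos : 0 ≤ ρ₀ - (y t)^2 - β^2*(z t)^2 := hin t (Ioo_subset_Icc_self ht)
    set num := (y t)*(deriv y t) + β^2*((z t)*(deriv z t)) with hnum
    have CS : num^2 ≤ ((y t)^2+β^2*(z t)^2) * ((deriv y t)^2 + (deriv z t)^2) := by
      rw [hnum]
      nlinarith [mul_nonneg (sq_nonneg β) (sq_nonneg ((y t)*(deriv z t) - (z t)*(deriv y t))),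
        mul_nonneg (mul_nonneg (sub_nonneg.2 hβ2) (sq_nonneg (y t))) (sq_nonneg (deriv z t)),
        mul_nonneg (mul_nonneg (mul_nonneg (sub_nonneg.2 hβ2) (sq_nonneg β)) (sq_nonneg (z t)))
          (sq_nonneg (deriv z t))]
    have h5 : |num| ≤ r t * Real.sqrt ((deriv y t)^2+(deriv z t)^2) := by
      have hr2 : (r t * Real.sqrt ((deriv y t)^2+(deriv z t)^2))^2
          = ((y t)^2+β^2*(z t)^2)*((deriv y t)^2+(deriv z t)^2) := by
        rw [mul_pow, hrt2, Real.sq_sqrt (by positivity)]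
      calc |num| = Real.sqrt (num^2) := (Real.sqrt_sq_eq_abs _).symm
        _ ≤ Real.sqrt ((r t * Real.sqrt ((deriv y t)^2+(deriv z t)^2))^2) :=
            Real.sqrt_le_sqrt (by rw [hr2]; exact CS)
        _ = r t * Real.sqrt ((deriv y t)^2+(deriv z t)^2) := Real.sqrt_sq (by positivity)
    have h7 : -Real.sqrt ((deriv y t)^2+(deriv z t)^2) ≤ num / r t := by
      rw [le_div_iff₀ hrtpos]
      nlinarith [(abs_le.1 h5).1]
    calc -((ρ₀ - (y t)^2 - β^2*(z t)^2) * Real.sqrt ((deriv y t)^2 + (deriv z t)^2))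
        = (ρ₀ - (y t)^2 - β^2*(z t)^2) * (-Real.sqrt ((deriv y t)^2 + (deriv z t)^2)) := by ring
      _ ≤ (ρ₀ - (y t)^2 - β^2*(z t)^2) * (num / r t) := mul_le_mul_of_nonneg_left h7 hPpos
      _ = (ρ₀ - (r t)^2) * ((2*(y t)*(deriv y t) + β^2*(2*(z t)*(deriv z t)))/(2*r t)) := by
          rw [hrt2]
          field_simp
          ring

set_option maxHeartbeats 1000000 in
/-- lower bound for the weighted length of a path joining
the level sets {ρ = ρ_*} and {ρ = ρ^*} of ρ(y,z) = ρ₀ - y² - β²z², 0 < β ≤ 1. -/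
theorem stmt_14 (ρ₀ β ρs ρe : ℝ) (hρ₀ : 0 < ρ₀) (hβ0 : 0 < β) (hβ : β ≤ 1)
    (h1 : 0 ≤ ρs) (h2 : ρs < ρe) (h3 : ρe ≤ ρ₀)
    (y z : ℝ → ℝ) (Ky Kz : NNReal)
    (hy : LipschitzWith Ky y) (hz : LipschitzWith Kz z)
    (hin : ∀ t ∈ Icc (0:ℝ) 1, 0 ≤ ρ₀ - (y t)^2 - β^2*(z t)^2)
    (hstart : ρ₀ - (y 0)^2 - β^2*(z 0)^2 = ρs)
    (hend : ρ₀ - (y 1)^2 - β^2*(z 1)^2 = ρe) :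
    (∫ w in (Real.sqrt (ρ₀ - ρe))..(Real.sqrt (ρ₀ - ρs)), (ρ₀ - w^2))
      ≤ (∫ t in (0:ℝ)..1,
          (ρ₀ - (y t)^2 - β^2*(z t)^2) * Real.sqrt ((deriv y t)^2 + (deriv z t)^2))
    ∧ (1/(4*Real.sqrt ρ₀)) * (ρe^2 - ρs^2)
      ≤ (∫ w in (Real.sqrt (ρ₀ - ρe))..(Real.sqrt (ρ₀ - ρs)), (ρ₀ - w^2))
    ∧ (1/(4*Real.sqrt ρ₀)) * (ρe - ρs)^2 ≤ (1/(4*Real.sqrt ρ₀)) * (ρe^2 - ρs^2) := by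
  set s0 := Real.sqrt ρ₀ with hs0
  set a := Real.sqrt (ρ₀ - ρe) with ha
  set b := Real.sqrt (ρ₀ - ρs) with hb
  have hs0pos : 0 < s0 := Real.sqrt_pos.2 hρ₀
  have hs02 : s0^2 = ρ₀ := Real.sq_sqrt hρ₀.le
  have ha0 : 0 ≤ a := Real.sqrt_nonneg _
  have hb0 : 0 ≤ b := Real.sqrt_nonneg _
  have ha2 : a^2 = ρ₀ - ρe := Real.sq_sqrt (by linarith)
  have hb2 : b^2 = ρ₀ - ρs := Real.sq_sqrt (by linarith)
  have hab : a ≤ b := Real.sqrt_le_sqrt (by linarith)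
  have hbs : b ≤ s0 := Real.sqrt_le_sqrt (by linarith)
  have has : a ≤ s0 := hab.trans hbs
  -- the integral ∫ a..b (ρ₀ - w²)
  have hIint : (∫ w in a..b, (ρ₀ - w^2)) = PhiS ρ₀ b - PhiS ρ₀ a := by
    rw [intervalIntegral.integral_sub (intervalIntegrable_const)
      ((continuous_pow 2).intervalIntegrable _ _)]
    rw [integral_pow, intervalIntegral.integral_const]
    simp only [PhiS, smul_eq_mul]
    push_cast; ring
  refine ⟨?_, ?_, ?_⟩
  · -- PART 1
    set r : ℝ → ℝ := fun t => Real.sqrt ((y t)^2 + β^2*(z t)^2) with hrdef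
    set g : ℝ → ℝ := fun t => psiS ρ₀ (r t) with hgdef
    set h : ℝ → ℝ := fun t =>
      (ρ₀ - (y t)^2 - β^2*(z t)^2) * Real.sqrt ((deriv y t)^2 + (deriv z t)^2) with hhdef
    -- Lipschitz constant for g
    have hgl : LipschitzWith (ρ₀.toNNReal * (Ky + Kz)) g := by
      apply LipschitzWith.of_dist_le_mul
      intro s t
      rw [Real.dist_eq, Real.dist_eq]
      have e1 : |g s - g t| ≤ ρ₀ * |r s - r t| := psiS_lip hρ₀.le (r s) (r t)
      have e2 : |r s - r t| ≤ |y s - y t| + β*|z s - z t| := sqrt_quad_lip hβ0.le _ _ _ _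
      have e3 : |y s - y t| ≤ (Ky:ℝ) * |s - t| := by
        have := hy.dist_le_mul s t
        rwa [Real.dist_eq, Real.dist_eq] at this
      have e4 : |z s - z t| ≤ (Kz:ℝ) * |s - t| := by
        have := hz.dist_le_mul s t
        rwa [Real.dist_eq, Real.dist_eq] at this
      have e5 : β*|z s - z t| ≤ (Kz:ℝ) * |s - t| := by
        calc β*|z s - z t| ≤ 1*|z s - z t| :=
              mul_le_mul_of_nonneg_right hβ (abs_nonneg _)
          _ = |z s - z t| := one_mul _
          _ ≤ (Kz:ℝ) * |s - t| := e4
      have e6 : ((ρ₀.toNNReal * (Ky + Kz) : NNReal) : ℝ) = ρ₀ * ((Ky:ℝ) + (Kz:ℝ)) := by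
        push_cast
        rw [Real.coe_toNNReal _ hρ₀.le]
      rw [e6]
      calc |g s - g t| ≤ ρ₀ * |r s - r t| := e1
        _ ≤ ρ₀ * ((Ky:ℝ) * |s - t| + (Kz:ℝ) * |s - t|) := by
            apply mul_le_mul_of_nonneg_left _ hρ₀.le
            linarith
        _ = ρ₀ * ((Ky:ℝ) + (Kz:ℝ)) * |s - t| := by ring
    -- endpoint values
    have hr0 : r 0 = b := by
      have e : (y 0)^2 + β^2*(z 0)^2 = ρ₀ - ρs := by linarith
      show Real.sqrt ((y 0)^2 + β^2*(z 0)^2) = Real.sqrt (ρ₀ - ρs)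
      rw [e]
    have hr1 : r 1 = a := by
      have e : (y 1)^2 + β^2*(z 1)^2 = ρ₀ - ρe := by linarith
      show Real.sqrt ((y 1)^2 + β^2*(z 1)^2) = Real.sqrt (ρ₀ - ρe)
      rw [e]
    have hg0 : g 0 = PhiS ρ₀ b := by
      rw [hgdef]
      simp only [psiS, hr0]
      rw [clampS_eq hb0 hbs]
    have hg1 : g 1 = PhiS ρ₀ a := by
      rw [hgdef]
      simp only [psiS, hr1]
      rw [clampS_eq ha0 has]
    -- integrabilities on Ioc 0 1
    set μ := volume.restrict (Set.Ioc (0:ℝ) 1) with hμ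
    have hIdg : Integrable (fun t => deriv g t) μ := by
      apply Integrable.mono' (integrable_const ((ρ₀.toNNReal * (Ky + Kz) : NNReal) : ℝ))
        (measurable_deriv g).aestronglyMeasurable
      exact ae_of_all _ fun t => by
        rw [Real.norm_eq_abs]; exact abs_deriv_le hgl t
    have hKy : ∀ t, |deriv y t| ≤ (Ky:ℝ) := abs_deriv_le hy
    have hKz : ∀ t, |deriv z t| ≤ (Kz:ℝ) := abs_deriv_le hz
    have hIh : Integrable h μ := by
      apply Integrable.mono' (integrable_const (ρ₀ * ((Ky:ℝ) + (Kz:ℝ))))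
      · apply Measurable.aestronglyMeasurable
        apply Measurable.mul
        · exact (measurable_const.sub ((hy.continuous.measurable).pow_const 2)).sub
            (((hz.continuous.measurable).pow_const 2).const_mul _)
        · exact Real.continuous_sqrt.measurable.comp
            (((measurable_deriv y).pow_const 2).add ((measurable_deriv z).pow_const 2))
      · rw [hμ, ae_restrict_iff' measurableSet_Ioc]
        apply ae_of_all
        intro t htI
        have htIcc : t ∈ Icc (0:ℝ) 1 := ⟨htI.1.le, htI.2⟩
        have hP0 : 0 ≤ ρ₀ - (y t)^2 - β^2*(z t)^2 := hin t htIcc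
        have hP1 : ρ₀ - (y t)^2 - β^2*(z t)^2 ≤ ρ₀ := by
          nlinarith [sq_nonneg (y t), sq_nonneg (z t), sq_nonneg β,
            mul_nonneg (sq_nonneg β) (sq_nonneg (z t))]
        have hsq : Real.sqrt ((deriv y t)^2 + (deriv z t)^2) ≤ (Ky:ℝ) + (Kz:ℝ) := by
          have hy2 : (deriv y t)^2 ≤ (Ky:ℝ)^2 := by
            nlinarith [hKy t, abs_nonneg (deriv y t), sq_abs (deriv y t)]
          have hz2 : (deriv z t)^2 ≤ (Kz:ℝ)^2 := by
            nlinarith [hKz t, abs_nonneg (deriv z t), sq_abs (deriv z t)]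
          have h7 : (deriv y t)^2 + (deriv z t)^2 ≤ ((Ky:ℝ) + (Kz:ℝ))^2 := by
            nlinarith [hy2, hz2, mul_nonneg Ky.coe_nonneg Kz.coe_nonneg]
          calc Real.sqrt ((deriv y t)^2 + (deriv z t)^2)
              ≤ Real.sqrt (((Ky:ℝ) + (Kz:ℝ))^2) := Real.sqrt_le_sqrt h7
            _ = (Ky:ℝ) + (Kz:ℝ) := Real.sqrt_sq (by positivity)
        rw [Real.norm_eq_abs, hhdef, abs_mul, abs_of_nonneg hP0,
          abs_of_nonneg (Real.sqrt_nonneg _)]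
        apply mul_le_mul hP1 hsq (Real.sqrt_nonneg _) hρ₀.le
    -- a.e. bound
    have key_ae : (fun t => -(deriv g t)) ≤ᵐ[μ] h := by
      have hae_y : ∀ᵐ t ∂μ, DifferentiableAt ℝ y t :=
        ae_restrict_of_ae hy.ae_differentiableAt_of_real
      have hae_z : ∀ᵐ t ∂μ, DifferentiableAt ℝ z t :=
        ae_restrict_of_ae hz.ae_differentiableAt_of_real
      have hae_g : ∀ᵐ t ∂μ, DifferentiableAt ℝ g t :=
        ae_restrict_of_ae hgl.ae_differentiableAt_of_real
      have hae_mem : ∀ᵐ t ∂μ, t ∈ Ioc (0:ℝ) 1 := ae_restrict_mem measurableSet_Ioc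
      have hae_ne : ∀ᵐ t ∂μ, t ≠ (1:ℝ) := by
        apply ae_restrict_of_ae
        rw [ae_iff]
        simpa using Real.volume_singleton
      filter_upwards [hae_y, hae_z, hae_g, hae_mem, hae_ne] with t hty htz htg htm htn
      have htIoo : t ∈ Ioo (0:ℝ) 1 := ⟨htm.1, lt_of_le_of_ne htm.2 htn⟩
      have := deriv_bound_pt ρ₀ β hρ₀ hβ0 hβ y z hin t htIoo hty htz htg
      simp only [hhdef]
      linarith
    -- put it together
    have hftc := lip_ftc hgl
    have hmono := integral_mono_ae hIdg.neg hIh key_ae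
    have hneg2 : ∫ t, -deriv g t ∂μ = g 0 - g 1 := by
      have e : ∫ t, -deriv g t ∂μ = -∫ t, deriv g t ∂μ := MeasureTheory.integral_neg _
      rw [e, hμ, hftc]
      ring
    rw [hIint]
    have hre : (∫ t in (0:ℝ)..1,
          (ρ₀ - (y t)^2 - β^2*(z t)^2) * Real.sqrt ((deriv y t)^2 + (deriv z t)^2))
        = ∫ t, h t ∂μ := by
      rw [intervalIntegral.integral_of_le zero_le_one, hμ]
    rw [hre]
    calc PhiS ρ₀ b - PhiS ρ₀ a = g 0 - g 1 := by rw [hg0, hg1]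
      _ = ∫ t, -deriv g t ∂μ := hneg2.symm
      _ ≤ ∫ t, h t ∂μ := hmono
  · -- PART 2
    have hρe : ρe = ρ₀ - a^2 := by linarith
    have hρs : ρs = ρ₀ - b^2 := by linarith
    have hcmp : (∫ w in a..b, (ρ₀ - w^2)*(w/s0)) ≤ ∫ w in a..b, (ρ₀ - w^2) := by
      apply intervalIntegral.integral_mono_on hab
      · exact (((continuous_const.sub (continuous_pow 2)).mul
          (continuous_id.div_const s0)).intervalIntegrable _ _)
      · exact ((continuous_const.sub (continuous_pow 2)).intervalIntegrable _ _)
      · intro w hw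
        have hw0 : 0 ≤ w := ha0.trans hw.1
        have hws : w ≤ s0 := hw.2.trans hbs
        have hP : 0 ≤ ρ₀ - w^2 := by nlinarith
        have hq : w/s0 ≤ 1 := by rw [div_le_one hs0pos]; exact hws
        have hq0 : 0 ≤ w/s0 := by positivity
        nlinarith
    have hval : (∫ w in a..b, (ρ₀ - w^2)*(w/s0))
        = (1/(4*s0)) * (ρe^2 - ρs^2) := by
      have hcong : Set.EqOn (fun w => (ρ₀ - w^2)*(w/s0)) (fun w => (ρ₀*w - w^3)/s0)
          (Set.uIcc a b) := fun w _ => by ring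
      rw [intervalIntegral.integral_congr hcong]
      rw [intervalIntegral.integral_div]
      rw [intervalIntegral.integral_sub (f := fun x => ρ₀ * x) (g := fun x => x^3)
        (((continuous_const.mul continuous_id').intervalIntegrable _ _))
        ((continuous_pow 3).intervalIntegrable _ _)]
      rw [intervalIntegral.integral_const_mul, integral_id, integral_pow]
      rw [hρe, hρs]
      have : b^4 = (b^2)^2 := by ring
      field_simp
      ring
    rw [← hval]
    exact hcmp
  · -- PART 3
    apply mul_le_mul_of_nonneg_left _ (by positivity)
    nlinarith
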